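/- arXiv:2405.01366 — 8 statements merged into one kernel-verified Lean document; each statement's English description precedes it below -/
import Mathlib

section
/- Let k ≥ 2 be a natural number, let x ∈ [0,1] be real, and let α_1, …, α_{k-1} be arbitrary real numbers. Define B_i = (x-1) · (∑_{j=1}^{i-1} α_j) + α_i for 1 ≤ i ≤ k-1, and B_k = 1 + (x-2) · (∑_{j=1}^{k-1} α_j). Then the minimum of B_1, …, B_k is at most 1 / (∑_{j=0}^{k-1} (2-x)^j). That is, the optimal value of the max–min optimization problem over the exponents is achieved by setting all terms equal, with value α₁(x) = 1 / (∑_{j=0}^{k-1} (2-x)^j). -/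
/-- For `k ≥ 2`, `x ∈ [0,1]` and arbitrary reals `α_1, …, α_{k-1}`, setting
`B_i = (x-1)·(∑_{j=1}^{i-1} α_j) + α_i` for `1 ≤ i ≤ k-1` and
`B_k = 1 + (x-2)·(∑_{j=1}^{k-1} α_j)`, the minimum of `B_1, …, B_k` is at most
`1/(∑_{j=0}^{k-1} (2-x)^j)`, i.e. some `B_i` is at most that value. -/
theorem stmt_6 (k : ℕ) (hk : 2 ≤ k) (x : ℝ) (hx : x ∈ Set.Icc (0 : ℝ) 1)
    (α : ℕ → ℝ) (B : ℕ → ℝ)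
    (hB : ∀ i, 1 ≤ i → i ≤ k - 1 →
      B i = (x - 1) * (∑ j ∈ Finset.Icc 1 (i - 1), α j) + α i)
    (hBk : B k = 1 + (x - 2) * (∑ j ∈ Finset.Icc 1 (k - 1), α j)) :
    ∃ i, 1 ≤ i ∧ i ≤ k ∧ B i ≤ 1 / ∑ j ∈ Finset.range k, (2 - x) ^ j := by
  by_contra hcon
  push_neg at hcon
  set t : ℝ := 2 - x with htdef
  have ht : 1 ≤ t := by simp only [htdef]; linarith [hx.2]
  have ht0 : 0 < t := lt_of_lt_of_le one_pos ht
  have hS : 0 < ∑ j ∈ Finset.range k, t ^ j := by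
    apply Finset.sum_pos (fun j _ => pow_pos ht0 j)
    exact Finset.nonempty_range_iff.mpr (by omega)
  set S : ℝ := ∑ j ∈ Finset.range k, t ^ j with hSdef
  -- telescoping on Icc 1 (k-1)
  set f : ℕ → ℝ := fun j => t ^ (k - j) * (∑ m ∈ Finset.Icc 1 j, α m) with hfdef
  have tel : ∑ i ∈ Finset.Icc 1 (k - 1), t ^ (k - i) * B i
      = t * ∑ m ∈ Finset.Icc 1 (k - 1), α m := by
    have hIcc : Finset.Icc 1 (k - 1) = Finset.Ico 1 k := by
      ext i; simp only [Finset.mem_Icc, Finset.mem_Ico]; omega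
    rw [hIcc, Finset.sum_Ico_eq_sum_range]
    have hterm : ∀ j ∈ Finset.range (k - 1),
        t ^ (k - (1 + j)) * B (1 + j) = f (j + 1) - f j := by
      intro j hj
      simp only [Finset.mem_range] at hj
      have hjk : j < k - 1 := by omega
      have hadd : 1 + j = j + 1 := by omega
      rw [hadd, hB (j + 1) (by omega) (by omega)]
      simp only [hfdef]
      have hsub : j + 1 - 1 = j := by omega
      rw [hsub]
      have hsucc : ∑ m ∈ Finset.Icc 1 (j + 1), α m
          = (∑ m ∈ Finset.Icc 1 j, α m) + α (j + 1) :=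
        Finset.sum_Icc_succ_top (by omega) α
      rw [hsucc]
      have hx1 : x - 1 = 1 - t := by simp only [htdef]; ring
      have hexp : k - j = (k - (j + 1)) + 1 := by omega
      rw [hx1, hexp, pow_succ]
      ring
    rw [Finset.sum_congr rfl hterm, Finset.sum_range_sub]
    simp only [hfdef]
    have h1 : k - (k - 1) = 1 := by omega
    have h2 : (Finset.Icc 1 0 : Finset ℕ) = ∅ := by decide
    simp [h1, h2]
    exact Or.inl (by rw [hIcc])
  have key : ∑ i ∈ Finset.Icc 1 k, t ^ (k - i) * B i = 1 := by
    have h1 : Finset.Icc 1 k = insert k (Finset.Icc 1 (k - 1)) := by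
      ext i; simp only [Finset.mem_Icc, Finset.mem_insert]; omega
    rw [h1, Finset.sum_insert (by simp only [Finset.mem_Icc]; omega), tel, hBk]
    have hkk : k - k = 0 := by omega
    have hx2 : x - 2 = -t := by simp only [htdef]; ring
    rw [hkk, hx2, pow_zero]
    ring
  have wsum : ∑ i ∈ Finset.Icc 1 k, t ^ (k - i) = S := by
    have hIcc2 : Finset.Icc 1 k = Finset.Ico 1 (k + 1) := by
      ext i; simp only [Finset.mem_Icc, Finset.mem_Ico]; omega
    rw [hIcc2, Finset.sum_Ico_eq_sum_range]
    simp only [Nat.add_sub_cancel]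
    have : ∀ j ∈ Finset.range k, t ^ (k - (1 + j)) = t ^ (k - 1 - j) := by
      intro j _; congr 1; omega
    rw [Finset.sum_congr rfl this, hSdef]
    exact Finset.sum_range_reflect (fun j => t ^ j) k
  have hne : (Finset.Icc 1 k).Nonempty := ⟨1, by simp only [Finset.mem_Icc]; omega⟩
  have hlt : ∑ i ∈ Finset.Icc 1 k, t ^ (k - i) * (1 / S)
      < ∑ i ∈ Finset.Icc 1 k, t ^ (k - i) * B i := by
    apply Finset.sum_lt_sum_of_nonempty hne
    intro i hi
    simp only [Finset.mem_Icc] at hi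
    exact mul_lt_mul_of_pos_left (hcon i hi.1 hi.2) (pow_pos ht0 _)
  rw [← Finset.sum_mul, wsum, key] at hlt
  rw [mul_one_div, div_self (ne_of_gt hS)] at hlt
  exact lt_irrefl 1 hlt
end

section
/- Let k ≥ 2 be a natural number, let x ∈ [0,1] be real, and let α_1, …, α_{k-1} be arbitrary real numbers. Define B_i = (x-1) · (∑_{j=1}^{i-1} α_j) + α_i for 1 ≤ i ≤ k-1, and B_k = 1 + (x-1) · (∑_{j=1}^{k-1} α_j). Then the minimum of B_1, …, B_k is at most 1 / (1 + (1-x) · ∑_{j=0}^{k-2} (2-x)^j). That is, the optimal value of the max–min optimization problem over the exponents is achieved by setting all terms equal, with value α₁(x) = 1 / (1 + (1-x) · ∑_{j=0}^{k-2} (2-x)^j). -/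
/-- For `k ≥ 2`, `x ∈ [0,1]` and arbitrary reals `α_1, …, α_{k-1}`, setting
`B_i = (x-1)·(∑_{j=1}^{i-1} α_j) + α_i` for `1 ≤ i ≤ k-1` and
`B_k = 1 + (x-1)·(∑_{j=1}^{k-1} α_j)`, the minimum of `B_1, …, B_k` is at most
`1/(1 + (1-x)·∑_{j=0}^{k-2} (2-x)^j)`, i.e. some `B_i` is at most that value. -/
theorem stmt_7 (k : ℕ) (hk : 2 ≤ k) (x : ℝ) (hx : x ∈ Set.Icc (0 : ℝ) 1)
    (α : ℕ → ℝ) (B : ℕ → ℝ)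
    (hB : ∀ i, 1 ≤ i → i ≤ k - 1 →
      B i = (x - 1) * (∑ j ∈ Finset.Icc 1 (i - 1), α j) + α i)
    (hBk : B k = 1 + (x - 1) * (∑ j ∈ Finset.Icc 1 (k - 1), α j)) :
    ∃ i, 1 ≤ i ∧ i ≤ k ∧
      B i ≤ 1 / (1 + (1 - x) * ∑ j ∈ Finset.range (k - 1), (2 - x) ^ j) := by
  obtain ⟨hx0, hx1⟩ := hx
  set S := ∑ j ∈ Finset.range (k - 1), (2 - x) ^ j with hS
  have hSnn : 0 ≤ S := Finset.sum_nonneg fun j _ => pow_nonneg (by linarith) j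
  have hden : (1 : ℝ) ≤ 1 + (1 - x) * S := by nlinarith
  set T := 1 / (1 + (1 - x) * S) with hT
  have hTeq : T * (1 + (1 - x) * S) = 1 := by
    rw [hT]; field_simp
  have hTnn : 0 ≤ T := by positivity
  by_contra h
  push_neg at h
  -- h : ∀ i, 1 ≤ i → i ≤ k → T < B i
  have key : ∀ m, m ≤ k - 1 →
      T * (∑ j ∈ Finset.range m, (2 - x) ^ j) ≤ ∑ j ∈ Finset.Icc 1 m, α j := by
    intro m
    induction m with
    | zero => intro _; simp
    | succ n ih =>
      intro hm
      have hn : n ≤ k - 1 := Nat.le_of_succ_le hm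
      have ih' := ih hn
      have h1 : 1 ≤ n + 1 := Nat.le_add_left 1 n
      have h2 : n + 1 ≤ k := le_trans hm (Nat.sub_le k 1)
      have hlt := h (n + 1) h1 h2
      have hBn := hB (n + 1) h1 hm
      simp only [Nat.add_sub_cancel] at hBn
      have hsum : ∑ j ∈ Finset.Icc 1 (n + 1), α j
          = (∑ j ∈ Finset.Icc 1 n, α j) + α (n + 1) :=
        Finset.sum_Icc_succ_top h1 α
      have hgeo : ∑ j ∈ Finset.range (n + 1), (2 - x) ^ j
          = (2 - x) * (∑ j ∈ Finset.range n, (2 - x) ^ j) + 1 := by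
        rw [geom_sum_succ]
      rw [hsum, hgeo]
      have h2x : (0 : ℝ) ≤ 2 - x := by linarith
      nlinarith [mul_le_mul_of_nonneg_left ih' h2x]
  have hk1 : 1 ≤ k - 1 := by omega
  have hkey := key (k - 1) le_rfl
  have hltk := h k (by omega) le_rfl
  rw [hBk] at hltk
  -- T < 1 + (x-1) * s  with  T*S ≤ s  and  x - 1 ≤ 0
  nlinarith [mul_le_mul_of_nonpos_left hkey (by linarith : x - 1 ≤ 0)]
end

section
/- Let p, q be natural numbers with 1 ≤ p < q, and set Δ = 2^q + 1 and d = 2^q - 2^p. Then d ≥ 1, Δ ≥ d + 3, and log(Δ - d - 1) / log(Δ - 1) = p/q, where log denotes the real natural logarithm. Consequently every rational number in the open interval (0,1) belongs to the set X = { log(Δ - d - 1)/log(Δ - 1) : d, Δ natural numbers with Δ ≥ d + 3 }. -/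
lemma aux_log (p q : ℕ) (hp : 1 ≤ p) (hpq : p < q) :
    Real.log (((2 ^ q + 1 : ℕ) : ℝ) - ((2 ^ q - 2 ^ p : ℕ) : ℝ) - 1) /
        Real.log (((2 ^ q + 1 : ℕ) : ℝ) - 1) = (p : ℝ) / (q : ℝ) := by
  have hle : (2:ℕ) ^ p ≤ 2 ^ q := Nat.pow_le_pow_right (by norm_num) hpq.le
  have h1 : (((2 ^ q - 2 ^ p : ℕ)) : ℝ) = (2:ℝ) ^ q - 2 ^ p := by
    push_cast [hle]; ring
  have h2 : (((2 ^ q + 1 : ℕ)) : ℝ) = (2:ℝ) ^ q + 1 := by push_cast; ring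
  rw [h1, h2]
  have e1 : (2:ℝ) ^ q + 1 - ((2:ℝ)^q - 2^p) - 1 = 2 ^ p := by ring
  have e2 : (2:ℝ) ^ q + 1 - 1 = 2 ^ q := by ring
  rw [e1, e2, Real.log_pow, Real.log_pow]
  have hl : Real.log 2 ≠ 0 := ne_of_gt (Real.log_pos (by norm_num))
  have hq : (q:ℝ) ≠ 0 := Nat.cast_ne_zero.mpr (by omega)
  field_simp

/-- For naturals `1 ≤ p < q`, with `Δ = 2^q + 1` and `d = 2^q - 2^p`,
one has `d ≥ 1`, `Δ ≥ d + 3`, and `log(Δ - d - 1)/log(Δ - 1) = p/q`. Consequently,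
every rational in `(0,1)` is of the form `log(Δ - d - 1)/log(Δ - 1)` for some
naturals `Δ ≥ d + 3`. -/
theorem stmt_8 (p q : ℕ) (hp : 1 ≤ p) (hpq : p < q) :
    1 ≤ 2 ^ q - 2 ^ p ∧
    (2 ^ q - 2 ^ p) + 3 ≤ 2 ^ q + 1 ∧
    Real.log (((2 ^ q + 1 : ℕ) : ℝ) - ((2 ^ q - 2 ^ p : ℕ) : ℝ) - 1) /
        Real.log (((2 ^ q + 1 : ℕ) : ℝ) - 1) = (p : ℝ) / (q : ℝ) ∧
    ∀ r : ℚ, 0 < r → r < 1 →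
      ∃ Δ d : ℕ, d + 3 ≤ Δ ∧
        Real.log ((Δ : ℝ) - (d : ℝ) - 1) / Real.log ((Δ : ℝ) - 1) = (r : ℝ) := by
  have hlt : (2:ℕ) ^ p < 2 ^ q := Nat.pow_lt_pow_right (by norm_num) hpq
  have hp2 : 2 ≤ (2:ℕ) ^ p := by
    calc 2 = 2 ^ 1 := rfl
    _ ≤ 2 ^ p := Nat.pow_le_pow_right (by norm_num) hp
  refine ⟨by omega, by omega, aux_log p q hp hpq, ?_⟩
  intro r hr0 hr1
  set a := r.num.toNat with ha
  set b := r.den with hb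
  have ha1 : 1 ≤ a := by
    have := Rat.num_pos.mpr hr0
    omega
  have hab : a < b := by
    have h := (Rat.lt_one_iff_num_lt_denom).mpr hr1
    have := Rat.num_pos.mpr hr0
    omega
  refine ⟨2 ^ b + 1, 2 ^ b - 2 ^ a, ?_, ?_⟩
  · have : (2:ℕ) ^ a < 2 ^ b := Nat.pow_lt_pow_right (by norm_num) hab
    have : 2 ≤ (2:ℕ) ^ a := by
      calc 2 = 2 ^ 1 := rfl
      _ ≤ 2 ^ a := Nat.pow_le_pow_right (by norm_num) ha1
    omega
  · have := aux_log a b ha1 hab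
    rw [this]
    rw [Rat.cast_def]
    have h3 : (a : ℝ) = (r.num : ℝ) := by
      have := Rat.num_pos.mpr hr0
      exact_mod_cast congrArg (Int.cast : ℤ → ℝ) (Int.toNat_of_nonneg this.le)
    rw [h3]
end

section
/- For all real numbers y₁, y₂ with 0 < y₁ < y₂ < 1, there exist natural numbers Δ and d with d ≥ 1 and Δ ≥ d + 3 such that y₁ < log(Δ - d - 1) / log(Δ - 1) < y₂, where log denotes the real natural logarithm. In other words, the set X = { log(Δ - d - 1)/log(Δ - 1) : d, Δ natural numbers with Δ ≥ d + 3 } is dense in the interval (0,1). -/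
/-- For all reals `0 < y₁ < y₂ < 1` there are naturals `Δ`, `d` with `d ≥ 1`,
`Δ ≥ d + 3` and `y₁ < log(Δ - d - 1)/log(Δ - 1) < y₂`; i.e. the set of efficiency factors
is dense in `(0,1)`. -/
theorem stmt_9 (y₁ y₂ : ℝ) (h₁ : 0 < y₁) (h₁₂ : y₁ < y₂) (h₂ : y₂ < 1) :
    ∃ Δ d : ℕ, 1 ≤ d ∧ d + 3 ≤ Δ ∧
      y₁ < Real.log ((Δ : ℝ) - (d : ℝ) - 1) / Real.log ((Δ : ℝ) - 1) ∧
      Real.log ((Δ : ℝ) - (d : ℝ) - 1) / Real.log ((Δ : ℝ) - 1) < y₂ := by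
  set ε : ℝ := min (min y₁ (1 - y₂)) (y₂ - y₁) with hε
  have hεpos : 0 < ε := by
    apply lt_min (lt_min h₁ (by linarith)) (by linarith)
  obtain ⟨k, hk⟩ := exists_nat_ge (max 2 (Real.exp (Real.log 2 / ε)))
  have hk2 : (2 : ℝ) ≤ (k : ℝ) := le_trans (le_max_left _ _) hk
  have hkC : Real.exp (Real.log 2 / ε) ≤ (k : ℝ) := le_trans (le_max_right _ _) hk
  have hkpos : (0 : ℝ) < k := by linarith
  have hlogk : Real.log 2 / ε ≤ Real.log k := by
    calc Real.log 2 / ε = Real.log (Real.exp (Real.log 2 / ε)) := (Real.log_exp _).symm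
    _ ≤ Real.log k := Real.log_le_log (Real.exp_pos _) hkC
  have hlogkpos : 0 < Real.log k := by
    have := Real.log_pos (by linarith : (1:ℝ) < k)
    linarith
  have hlog2 : (0:ℝ) < Real.log 2 := Real.log_pos (by norm_num)
  -- key inequality: for any c ≥ ε, c * log k ≥ log 2, hence k ^ c ≥ 2
  have key : ∀ c : ℝ, ε ≤ c → (2 : ℝ) ≤ (k : ℝ) ^ c := by
    intro c hc
    have h1 : Real.log 2 ≤ ε * Real.log k := by
      rw [div_le_iff₀ hεpos] at hlogk; linarith [hlogk]
    have h2 : ε * Real.log k ≤ c * Real.log k :=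
      mul_le_mul_of_nonneg_right hc (le_of_lt hlogkpos)
    have : Real.log 2 ≤ c * Real.log k := le_trans h1 h2
    calc (2:ℝ) = Real.exp (Real.log 2) := (Real.exp_log (by norm_num)).symm
    _ ≤ Real.exp (c * Real.log k) := Real.exp_le_exp.mpr this
    _ = Real.exp (Real.log k * c) := by rw [mul_comm]
    _ = (k : ℝ) ^ c := (Real.rpow_def_of_pos hkpos c).symm
  set A : ℝ := (k : ℝ) ^ y₁ with hA
  set B : ℝ := (k : ℝ) ^ y₂ with hB
  have hA2 : (2 : ℝ) ≤ A := key y₁ (le_trans (min_le_left _ _) (min_le_left _ _))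
  have hApos : (0 : ℝ) < A := by linarith
  have hBA : A * 2 ≤ B := by
    have : B = A * (k : ℝ) ^ (y₂ - y₁) := by
      rw [hA, hB, ← Real.rpow_add hkpos]; ring_nf
    rw [this]
    exact mul_le_mul_of_nonneg_left (key _ (min_le_right _ _)) (le_of_lt hApos)
  have hBk : B ≤ (k : ℝ) - 1 := by
    have h1 : (2:ℝ) ≤ (k : ℝ) ^ (1 - y₂) :=
      key _ (le_trans (min_le_left _ _) (min_le_right _ _))
    have h2 : B * ((k:ℝ) ^ (1 - y₂)) = k := by
      rw [hB, ← Real.rpow_add hkpos, add_sub_cancel, Real.rpow_one]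
    have hBpos : 0 < B := by linarith
    nlinarith [mul_le_mul_of_nonneg_left h1 (le_of_lt hBpos)]
  set m : ℕ := ⌊A⌋₊ + 1 with hm
  have hmA : A < (m : ℝ) := by
    have := Nat.lt_floor_add_one A
    push_cast [hm]; linarith
  have hmA1 : (m : ℝ) ≤ A + 1 := by
    have := Nat.floor_le (le_of_lt hApos)
    push_cast [hm]; linarith
  have hmB : (m : ℝ) < B := by linarith
  have hm3 : 3 ≤ m := by
    have : 2 ≤ ⌊A⌋₊ := Nat.le_floor (by exact_mod_cast hA2)
    omega
  have hmk : (m : ℝ) < (k : ℝ) - 1 := lt_of_lt_of_le hmB hBk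
  have hmkn : m < k := by exact_mod_cast (show (m:ℝ) < (k:ℝ) by linarith)
  refine ⟨k + 1, k - m, by omega, by omega, ?_, ?_⟩ <;>
  · have hcast1 : ((k + 1 : ℕ) : ℝ) - ((k - m : ℕ) : ℝ) - 1 = (m : ℝ) := by
      have : ((k - m : ℕ) : ℝ) = (k : ℝ) - m := by
        push_cast [Nat.cast_sub (by omega : m ≤ k)]; ring
      rw [this]; push_cast; ring
    have hcast2 : ((k + 1 : ℕ) : ℝ) - 1 = (k : ℝ) := by push_cast; ring
    rw [hcast1, hcast2]
    have hmpos : (0:ℝ) < m := by positivity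
    have hlogA : Real.log A = y₁ * Real.log k := Real.log_rpow hkpos y₁
    have hlogB : Real.log B = y₂ * Real.log k := Real.log_rpow hkpos y₂
    first
    | · rw [lt_div_iff₀ hlogkpos]
        calc y₁ * Real.log k = Real.log A := hlogA.symm
        _ < Real.log m := Real.log_lt_log hApos hmA
    | · rw [div_lt_iff₀ hlogkpos]
        calc Real.log m < Real.log B := Real.log_lt_log hmpos hmB
        _ = y₂ * Real.log k := hlogB
end

section
/- For every real ε > 0 and all natural numbers a, b with 1 ≤ a < b, there exist natural numbers Δ and d with d ≥ 1 and Δ ≥ d + 3 such that log(Δ - d - 1) / log(Δ - 1) = a/b and |log(Δ - d + 1) / log(Δ - 1) - a/b| < ε, where log denotes the real natural logarithm. -/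
/-- For every `ε > 0` and naturals `1 ≤ a < b`, there are naturals `Δ`, `d`
with `d ≥ 1`, `Δ ≥ d + 3`, efficiency factor `log(Δ - d - 1)/log(Δ - 1) = a/b`, and
perturbed efficiency factor `log(Δ - d + 1)/log(Δ - 1)` within `ε` of `a/b`. -/
theorem stmt_10 (ε : ℝ) (hε : 0 < ε) (a b : ℕ) (ha : 1 ≤ a) (hab : a < b) :
    ∃ Δ d : ℕ, 1 ≤ d ∧ d + 3 ≤ Δ ∧
      Real.log ((Δ : ℝ) - (d : ℝ) - 1) / Real.log ((Δ : ℝ) - 1) = (a : ℝ) / (b : ℝ) ∧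
      |Real.log ((Δ : ℝ) - (d : ℝ) + 1) / Real.log ((Δ : ℝ) - 1) - (a : ℝ) / (b : ℝ)|
        < ε := by
  have hlog2 : (0:ℝ) < Real.log 2 := Real.log_pos one_lt_two
  set n : ℕ := ⌈2 / (ε * Real.log 2)⌉₊ + 2 with hndef
  have hn2 : 2 ≤ n := by omega
  have hnR : (2:ℝ) ≤ (n:ℝ) := by exact_mod_cast hn2
  have hnpos : (0:ℝ) < (n:ℝ) := by linarith
  have hnx : 2 / (ε * Real.log 2) < (n : ℝ) := by
    calc 2 / (ε * Real.log 2) ≤ (⌈2 / (ε * Real.log 2)⌉₊ : ℝ) := Nat.le_ceil _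
    _ < (n:ℝ) := by exact_mod_cast (by omega : ⌈2 / (ε * Real.log 2)⌉₊ < n)
  have h2n : 2 / (n:ℝ) < ε * Real.log 2 := by
    rw [div_lt_iff₀ hnpos]
    rw [div_lt_iff₀ (by positivity)] at hnx
    linarith [hnx]
  have hpow : n ^ a ≤ n ^ b := Nat.pow_le_pow_right (by omega) (le_of_lt hab)
  have hpowlt : n ^ a < n ^ b := Nat.pow_lt_pow_right (by omega) hab
  have hpa2 : 2 ≤ n ^ a := le_trans hn2 (Nat.le_self_pow (by omega) n)
  have hlogn : 0 < Real.log n :=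
    Real.log_pos (by exact_mod_cast (by omega : 1 < n))
  have hb0 : (0:ℝ) < (b:ℝ) := by exact_mod_cast (by omega : 0 < b)
  have hD : (0:ℝ) < (b:ℝ) * Real.log n := by positivity
  have hpaR : (0:ℝ) < (n:ℝ) ^ a := by positivity
  have hnaR : (2:ℝ) ≤ (n:ℝ) ^ a := by
    calc (2:ℝ) ≤ (n:ℝ) := hnR
    _ ≤ (n:ℝ) ^ a := le_self_pow₀ (by linarith) (by omega)
  refine ⟨n ^ b + 1, n ^ b - n ^ a, by omega, by omega, ?_, ?_⟩
  · have hc1 : ((n ^ b + 1 : ℕ) : ℝ) - ((n ^ b - n ^ a : ℕ) : ℝ) - 1 = (n:ℝ) ^ a := by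
      push_cast [Nat.cast_sub hpow]; ring
    have hc2 : ((n ^ b + 1 : ℕ) : ℝ) - 1 = (n:ℝ) ^ b := by push_cast; ring
    rw [hc1, hc2, Real.log_pow, Real.log_pow]
    field_simp
  · have hc2 : ((n ^ b + 1 : ℕ) : ℝ) - 1 = (n:ℝ) ^ b := by push_cast; ring
    have hc3 : ((n ^ b + 1 : ℕ) : ℝ) - ((n ^ b - n ^ a : ℕ) : ℝ) + 1 = (n:ℝ) ^ a + 2 := by
      push_cast [Nat.cast_sub hpow]; ring
    rw [hc2, hc3, Real.log_pow]
    set L : ℝ := Real.log ((n:ℝ) ^ a + 2) - Real.log ((n:ℝ) ^ a) with hLdef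
    have habq : (a:ℝ) / (b:ℝ) = Real.log ((n:ℝ) ^ a) / ((b:ℝ) * Real.log n) := by
      rw [Real.log_pow]; field_simp
    have hkey : Real.log ((n:ℝ) ^ a + 2) / ((b:ℝ) * Real.log n) - (a:ℝ) / (b:ℝ)
        = L / ((b:ℝ) * Real.log n) := by
      rw [habq, div_sub_div_same]
    rw [hkey]
    have hL0 : 0 ≤ L := by
      have := Real.log_le_log hpaR (by linarith : (n:ℝ) ^ a ≤ (n:ℝ) ^ a + 2)
      exact sub_nonneg.2 this
    have hLle : L ≤ 2 / (n:ℝ) ^ a := by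
      have hq : L = Real.log (((n:ℝ) ^ a + 2) / (n:ℝ) ^ a) := by
        rw [Real.log_div (by linarith) (ne_of_gt hpaR)]
      have hqpos : (0:ℝ) < ((n:ℝ) ^ a + 2) / (n:ℝ) ^ a := by positivity
      have := Real.log_le_sub_one_of_pos hqpos
      rw [hq]
      have : (((n:ℝ) ^ a + 2) / (n:ℝ) ^ a) - 1 = 2 / (n:ℝ) ^ a := by
        field_simp
        ring
      linarith [Real.log_le_sub_one_of_pos hqpos, this]
    rw [abs_of_nonneg (by positivity)]
    rw [div_lt_iff₀ hD]
    have h1 : 2 / (n:ℝ) ^ a ≤ 2 / (n:ℝ) := by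
      apply div_le_div_of_nonneg_left (by norm_num) hnpos
      exact le_self_pow₀ (by linarith) (by omega)
    have h2 : ε * Real.log 2 ≤ ε * ((b:ℝ) * Real.log n) := by
      apply mul_le_mul_of_nonneg_left _ (le_of_lt hε)
      calc Real.log 2 ≤ Real.log n := Real.log_le_log (by norm_num) hnR
      _ = 1 * Real.log n := by ring
      _ ≤ (b:ℝ) * Real.log n := by
          apply mul_le_mul_of_nonneg_right _ (le_of_lt hlogn)
          exact_mod_cast (by omega : 1 ≤ b)
    linarith
end

section
/- Let Δ and d be natural numbers with d ≥ 1 and Δ ≥ d + 3, and let U ≥ 1 be a real number. Let L = ⌊log U / log(Δ - 1)⌋ (the floor of the base-(Δ-1) logarithm of U). Then ((Δ - d) / (Δ - 1 - d)) · ∑_{i=0}^{L} (Δ - 1 - d)^i ≤ 4 · U^{log(Δ - 1 - d) / log(Δ - 1)}, where the power on the right is a real power and log is the real natural logarithm. -/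
/-- For naturals `d ≥ 1`, `Δ ≥ d + 3` and a real `U ≥ 1`, with
`L = ⌊log U / log(Δ - 1)⌋`, one has
`((Δ-d)/(Δ-1-d)) · ∑_{i=0}^{L} (Δ-1-d)^i ≤ 4 · U^{log(Δ-1-d)/log(Δ-1)}`. -/
theorem stmt_14 (Δ d : ℕ) (hd : 1 ≤ d) (h : d + 3 ≤ Δ) (U : ℝ) (hU : 1 ≤ U) :
    ((Δ : ℝ) - (d : ℝ)) / ((Δ : ℝ) - 1 - (d : ℝ)) *
        ∑ i ∈ Finset.range (⌊Real.log U / Real.log ((Δ : ℝ) - 1)⌋₊ + 1),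
          ((Δ : ℝ) - 1 - (d : ℝ)) ^ i ≤
      4 * U ^ (Real.log ((Δ : ℝ) - 1 - (d : ℝ)) / Real.log ((Δ : ℝ) - 1)) := by
  have hcast : (d:ℝ) + 3 ≤ (Δ:ℝ) := by exact_mod_cast h
  have hd1 : (1:ℝ) ≤ (d:ℝ) := by exact_mod_cast hd
  set L := ⌊Real.log U / Real.log ((Δ : ℝ) - 1)⌋₊ with hLdef
  set A : ℝ := (Δ : ℝ) - 1 - (d : ℝ) with hAdef
  have hA : (2:ℝ) ≤ A := by simp only [hAdef]; linarith
  have hA1 : (1:ℝ) < A := by linarith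
  have hApos : (0:ℝ) < A := by linarith
  have hΔ : (1:ℝ) < (Δ:ℝ) - 1 := by linarith
  have hlogΔ : 0 < Real.log ((Δ:ℝ)-1) := Real.log_pos hΔ
  have hlogU : 0 ≤ Real.log U := Real.log_nonneg hU
  have hLle : (L:ℝ) ≤ Real.log U / Real.log ((Δ:ℝ)-1) :=
    Nat.floor_le (by positivity)
  have key : A ^ L ≤ U ^ (Real.log A / Real.log ((Δ:ℝ)-1)) := by
    have h1 : A ^ (L:ℝ) ≤ A ^ (Real.log U / Real.log ((Δ:ℝ)-1)) :=
      Real.rpow_le_rpow_of_exponent_le (le_of_lt hA1) hLle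
    rw [Real.rpow_natCast] at h1
    calc A ^ L ≤ A ^ (Real.log U / Real.log ((Δ:ℝ)-1)) := h1
      _ = U ^ (Real.log A / Real.log ((Δ:ℝ)-1)) := by
        rw [Real.rpow_def_of_pos hApos, Real.rpow_def_of_pos (by linarith : (0:ℝ) < U)]
        ring_nf
  have hP1 : (1:ℝ) ≤ A ^ L := one_le_pow₀ (le_of_lt hA1)
  have hgeom : ∑ i ∈ Finset.range (L+1), A ^ i = (A ^ (L+1) - 1)/(A - 1) :=
    geom_sum_eq (by linarith) _
  have hΔd : (Δ:ℝ) - (d:ℝ) = A + 1 := by simp [hAdef]; ring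
  rw [hΔd, hgeom, pow_succ]
  have main : (A+1)/A * ((A^L * A - 1)/(A-1)) ≤ 4 * (A^L) := by
    rw [div_mul_div_comm, div_le_iff₀ (by nlinarith : (0:ℝ) < A*(A-1))]
    nlinarith [hP1, hA, mul_nonneg (by nlinarith : (0:ℝ) ≤ A*(3*A-5)) (by linarith : (0:ℝ) ≤ A^L)]
  calc (A+1)/A * ((A^L * A - 1)/(A-1)) ≤ 4 * (A^L) := main
    _ ≤ 4 * U ^ (Real.log A / Real.log ((Δ:ℝ)-1)) := by linarith
end

section
/- Let k ≥ 2 be a natural number and let r₁, r₂ be real numbers with 1/(2^k - 1) < r₁ < r₂ < 1/k. Then there exist natural numbers Δ and d with d ≥ 1 and Δ ≥ d + 3 such that, setting x = log(Δ - d - 1)/log(Δ - 1) (real natural logarithm), one has 0 < x < 1 and r₁ ≤ 1/(∑_{j=0}^{k-1} (2-x)^j) ≤ r₂. -/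
/-- For `k ≥ 2` and reals `1/(2^k - 1) < r₁ < r₂ < 1/k`, there are naturals
`Δ`, `d` with `d ≥ 1`, `Δ ≥ d + 3`, efficiency factor `x = log(Δ-d-1)/log(Δ-1)` satisfying
`0 < x < 1` and `r₁ ≤ 1/(∑_{j=0}^{k-1} (2-x)^j) ≤ r₂`. -/
theorem stmt_17 (k : ℕ) (hk : 2 ≤ k) (r₁ r₂ : ℝ)
    (h₁ : 1 / ((2 : ℝ) ^ k - 1) < r₁) (h₁₂ : r₁ < r₂) (h₂ : r₂ < 1 / (k : ℝ)) :
    ∃ Δ d : ℕ, 1 ≤ d ∧ d + 3 ≤ Δ ∧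
      0 < Real.log ((Δ : ℝ) - (d : ℝ) - 1) / Real.log ((Δ : ℝ) - 1) ∧
      Real.log ((Δ : ℝ) - (d : ℝ) - 1) / Real.log ((Δ : ℝ) - 1) < 1 ∧
      r₁ ≤ 1 / (∑ j ∈ Finset.range k,
        (2 - Real.log ((Δ : ℝ) - (d : ℝ) - 1) / Real.log ((Δ : ℝ) - 1)) ^ j) ∧
      1 / (∑ j ∈ Finset.range k,
        (2 - Real.log ((Δ : ℝ) - (d : ℝ) - 1) / Real.log ((Δ : ℝ) - 1)) ^ j) ≤ r₂ := by
  set f : ℝ → ℝ := fun x => 1 / (∑ j ∈ Finset.range k, (2 - x) ^ j) with hfdef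
  have hkpos : (0 : ℝ) < k := by positivity
  -- positivity of the denominator for x < 2
  have hgpos : ∀ x : ℝ, x < 2 → 0 < ∑ j ∈ Finset.range k, (2 - x) ^ j := by
    intro x hx
    apply Finset.sum_pos
    · intro j _
      have h2x : 0 < 2 - x := by linarith
      positivity
    · exact Finset.nonempty_range_iff.mpr (by omega)
  -- continuity of f on Iio 2
  have hcont : ContinuousOn f (Set.Iio (2 : ℝ)) := by
    apply ContinuousOn.div continuousOn_const
    · exact (continuous_finset_sum _ fun j _ => by continuity).continuousOn
    · intro x hx; exact (hgpos x hx).ne'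
  have hIcc : Set.Icc (0 : ℝ) 1 ⊆ Set.Iio 2 := fun x hx => lt_of_le_of_lt hx.2 (by norm_num)
  have hf0 : f 0 = 1 / ((2 : ℝ) ^ k - 1) := by
    simp only [hfdef, sub_zero]
    rw [geom_sum_eq (by norm_num : (2 : ℝ) ≠ 1)]
    norm_num
  have hf1 : f 1 = 1 / (k : ℝ) := by
    rw [hfdef]; norm_num
  set c : ℝ := (r₁ + r₂) / 2 with hcdef
  have hc1 : r₁ < c := by rw [hcdef]; linarith
  have hc2 : c < r₂ := by rw [hcdef]; linarith
  have hcmem : c ∈ Set.Icc (f 0) (f 1) := by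
    rw [hf0, hf1]; constructor <;> [linarith; linarith]
  obtain ⟨x, hxmem, hfx⟩ := intermediate_value_Icc (by norm_num : (0:ℝ) ≤ 1)
    (hcont.mono hIcc) hcmem
  have hx0 : 0 < x := by
    rcases lt_or_eq_of_le hxmem.1 with h | h
    · exact h
    · exfalso; rw [← h] at hfx; rw [hf0] at hfx; linarith
  have hx1 : x < 1 := by
    rcases lt_or_eq_of_le hxmem.2 with h | h
    · exact h
    · exfalso; rw [h] at hfx; rw [hf1] at hfx; linarith
  -- continuity at x
  have hcx : ContinuousAt f x :=
    hcont.continuousAt (isOpen_Iio.mem_nhds (hIcc hxmem))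
  have hnb : f ⁻¹' Set.Ioo r₁ r₂ ∈ nhds x := by
    apply hcx.preimage_mem_nhds
    exact isOpen_Ioo.mem_nhds (by rw [hfx]; exact ⟨hc1, hc2⟩)
  have hnb2 : (Set.Ioo (0:ℝ) 1 ∩ f ⁻¹' Set.Ioo r₁ r₂) ∈ nhds x :=
    Filter.inter_mem (isOpen_Ioo.mem_nhds ⟨hx0, hx1⟩) hnb
  obtain ⟨ε, hε, hball⟩ := Metric.mem_nhds_iff.mp hnb2
  obtain ⟨q, hq1, hq2⟩ := exists_rat_btwn (show x - ε < x by linarith)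
  have hqx : |(q : ℝ) - x| < ε := by
    have : (q : ℝ) < x + ε := by linarith
    rw [abs_sub_lt_iff]; constructor <;> linarith
  have hqmem : (q : ℝ) ∈ Set.Ioo (0:ℝ) 1 ∩ f ⁻¹' Set.Ioo r₁ r₂ := by
    apply hball
    rw [Metric.mem_ball, Real.dist_eq]; exact hqx
  obtain ⟨⟨hq0, hq1'⟩, hqf⟩ := hqmem
  -- extract numerator/denominator
  set a : ℕ := q.num.toNat with hadef
  set b : ℕ := q.den with hbdef
  have hqpos : 0 < q := by exact_mod_cast hq0
  have hqlt1 : q < 1 := by exact_mod_cast hq1'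
  have hnum : (0 : ℤ) < q.num := Rat.num_pos.mpr hqpos
  have ha1 : 1 ≤ a := by omega
  have hbpos : 0 < b := q.den_pos
  have hqab : (q : ℝ) = (a : ℝ) / (b : ℝ) := by
    rw [Rat.cast_def]
    congr 1
    exact_mod_cast (Int.toNat_of_nonneg hnum.le).symm
  have hab : a < b := by
    rw [hqab] at hq1'
    have : (a : ℝ) < b := (div_lt_one (by positivity)).mp hq1'
    exact_mod_cast this
  -- define Δ and d
  refine ⟨2 ^ b + 1, 2 ^ b - 2 ^ a, ?_, ?_, ?_⟩
  · have : 2 ^ a < 2 ^ b := Nat.pow_lt_pow_right (by norm_num) hab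
    omega
  · have h2a : 2 ≤ 2 ^ a := by
      calc 2 = 2 ^ 1 := rfl
      _ ≤ 2 ^ a := Nat.pow_le_pow_right (by norm_num) ha1
    have := Nat.pow_le_pow_right (show 1 ≤ 2 by norm_num) hab.le
    omega
  · have hle : 2 ^ a ≤ 2 ^ b := Nat.pow_le_pow_right (by norm_num) hab.le
    have e1 : ((2 ^ b + 1 : ℕ) : ℝ) - ((2 ^ b - 2 ^ a : ℕ) : ℝ) - 1 = (2 : ℝ) ^ a := by
      push_cast [Nat.cast_sub hle]; ring
    have e2 : ((2 ^ b + 1 : ℕ) : ℝ) - 1 = (2 : ℝ) ^ b := by push_cast; ring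
    have hL : Real.log (((2 ^ b + 1 : ℕ) : ℝ) - ((2 ^ b - 2 ^ a : ℕ) : ℝ) - 1) /
        Real.log (((2 ^ b + 1 : ℕ) : ℝ) - 1) = (q : ℝ) := by
      rw [e1, e2, Real.log_pow, Real.log_pow, hqab,
        mul_div_mul_right _ _ (Real.log_pos (by norm_num)).ne']
    rw [hL]
    have hfq := hqf
    simp only [hfdef, Set.mem_preimage, Set.mem_Ioo] at hfq
    exact ⟨hq0, hq1', hfq.1.le, hfq.2.le⟩
end

section
/- For all real numbers r₁, r₂ with 0 < r₁ < r₂ < 1 and every real ε > 0, there exist natural numbers k ≥ 2, Δ, and d with d ≥ 1 and Δ ≥ d + 3 such that, setting x = log(Δ - d - 1)/log(Δ - 1) and x' = log(Δ - d + 1)/log(Δ - 1) (real natural logarithm), and writing α₁(y) = 1/(1 + (1-y) · ∑_{j=0}^{k-2} (2-y)^j), one has r₁ ≤ α₁(x) ≤ r₂, α₁(x) ≤ α₁(x') ≤ r₂, and α₁(x') ≤ α₁(x) + ε. -/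
set_option maxHeartbeats 1000000 in
open Real Finset in

/-- For reals `0 < r₁ < r₂ < 1` and `ε > 0`, there are naturals `k ≥ 2`, `Δ`,
`d` with `d ≥ 1`, `Δ ≥ d + 3` such that, with `x = log(Δ-d-1)/log(Δ-1)`,
`x' = log(Δ-d+1)/log(Δ-1)` and `α₁(y) = 1/(1 + (1-y)·∑_{j=0}^{k-2} (2-y)^j)`, one has
`r₁ ≤ α₁(x) ≤ r₂`, `α₁(x) ≤ α₁(x') ≤ r₂`, and `α₁(x') ≤ α₁(x) + ε`. -/
theorem stmt_18 (r₁ r₂ ε : ℝ) (h₁ : 0 < r₁) (h₁₂ : r₁ < r₂) (h₂ : r₂ < 1) (hε : 0 < ε) :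
    ∃ k Δ d : ℕ, 2 ≤ k ∧ 1 ≤ d ∧ d + 3 ≤ Δ ∧
      ∀ x x' : ℝ,
        x = Real.log ((Δ : ℝ) - (d : ℝ) - 1) / Real.log ((Δ : ℝ) - 1) →
        x' = Real.log ((Δ : ℝ) - (d : ℝ) + 1) / Real.log ((Δ : ℝ) - 1) →
        ∀ α₁ : ℝ → ℝ,
          (α₁ = fun y => 1 / (1 + (1 - y) * ∑ j ∈ Finset.range (k - 1), (2 - y) ^ j)) →
          r₁ ≤ α₁ x ∧ α₁ x ≤ r₂ ∧ α₁ x ≤ α₁ x' ∧ α₁ x' ≤ r₂ ∧ α₁ x' ≤ α₁ x + ε := by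
  have hr₂0 : 0 < r₂ := h₁.trans h₁₂
  have hr₁1 : r₁ < 1 := h₁₂.trans h₂
  have hr₁inv : 1 < 1 / r₁ := one_lt_one_div h₁ hr₁1
  have hr₂inv : 1 < 1 / r₂ := one_lt_one_div hr₂0 h₂
  obtain ⟨n, hn⟩ : ∃ n : ℕ, 1 / r₁ < 2 ^ n := pow_unbounded_of_one_lt _ one_lt_two
  have hn0 : n ≠ 0 := by
    rintro rfl
    rw [one_div] at hr₁inv
    simp at hn
    linarith
  have hnR : (0:ℝ) < n := by
    have : 0 < n := Nat.pos_of_ne_zero hn0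
    exact_mod_cast this
  set A : ℝ := (1 / r₁) ^ ((n:ℝ)⁻¹) with hAdef
  set B : ℝ := (1 / r₂) ^ ((n:ℝ)⁻¹) with hBdef
  have hApow : A ^ n = 1 / r₁ := by
    rw [hAdef, ← Real.rpow_natCast (_ ^ _) n, ← Real.rpow_mul (by positivity),
      inv_mul_cancel₀ (ne_of_gt hnR), Real.rpow_one]
  have hBpow : B ^ n = 1 / r₂ := by
    rw [hBdef, ← Real.rpow_natCast (_ ^ _) n, ← Real.rpow_mul (by positivity),
      inv_mul_cancel₀ (ne_of_gt hnR), Real.rpow_one]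
  have hA1 : 1 < A :=
    (Real.one_lt_rpow_iff_of_pos (by positivity)).2 (Or.inl ⟨hr₁inv, inv_pos.2 hnR⟩)
  have hB1 : 1 < B :=
    (Real.one_lt_rpow_iff_of_pos (by positivity)).2 (Or.inl ⟨hr₂inv, inv_pos.2 hnR⟩)
  have hA2 : A < 2 := by
    have h2 : A ^ n < 2 ^ n := by rw [hApow]; exact hn
    exact lt_of_pow_lt_pow_left₀ n (by norm_num) h2
  have hBA : B < A := by
    apply Real.rpow_lt_rpow (by positivity) _ (inv_pos.2 hnR)
    exact one_div_lt_one_div_of_lt h₁ h₁₂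
  set y₀ : ℝ := 2 - A with hy₀def
  have hy₀0 : 0 < y₀ := by rw [hy₀def]; linarith
  have hy₀1 : y₀ < 1 := by rw [hy₀def]; linarith
  obtain ⟨q, hq⟩ := exists_nat_gt (max (2 / (A - B)) ((n:ℝ) / ε))
  have hqAB : 2 / (A - B) < q := lt_of_le_of_lt (le_max_left _ _) hq
  have hqε : (n:ℝ) / ε < q := lt_of_le_of_lt (le_max_right _ _) hq
  have hq0 : (0:ℝ) < q := lt_trans (div_pos two_pos (by linarith)) hqAB
  have hABq : 2 ≤ (A - B) * q := by
    rw [div_lt_iff₀ (by linarith)] at hqAB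
    nlinarith
  have h2q : 2 / (q:ℝ) ≤ A - B := by
    rw [div_le_iff₀ hq0]; nlinarith
  have hnqε : (n:ℝ) / q < ε := by
    rw [div_lt_iff₀ hq0]
    rw [div_lt_iff₀ hε] at hqε
    nlinarith
  set p : ℕ := ⌈y₀ * q⌉₊ with hpdef
  have hp1 : 1 ≤ p := Nat.ceil_pos.2 (by positivity)
  have hple : y₀ * q ≤ p := Nat.le_ceil _
  have hplt : (p:ℝ) < y₀ * q + 1 := Nat.ceil_lt_add_one (by positivity)
  have hpqR : (p:ℝ) + 1 < q := by
    have h1 : 0 < (B - 1) * q := mul_pos (by linarith) hq0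
    nlinarith
  have hpq : p < q := by
    have : (p:ℝ) < q := by linarith
    exact_mod_cast this
  have h3pq : (3:ℕ) ^ p < 3 ^ q := Nat.pow_lt_pow_right (by norm_num) hpq
  have h3p3 : (3:ℕ) ≤ 3 ^ p :=
    calc (3:ℕ) = 3 ^ 1 := by norm_num
    _ ≤ 3 ^ p := Nat.pow_le_pow_right (by norm_num) hp1
  refine ⟨n + 1, 3 ^ q + 1, 3 ^ q - 3 ^ p, by omega, by omega, by omega, ?_⟩
  intro x x' hx hx' α₁ hα₁
  have hcast : ((3 ^ q - 3 ^ p : ℕ) : ℝ) = (3:ℝ) ^ q - (3:ℝ) ^ p := by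
    push_cast [Nat.cast_sub h3pq.le]; ring
  have hc1 : ((3 ^ q + 1 : ℕ) : ℝ) - ((3 ^ q - 3 ^ p : ℕ) : ℝ) - 1 = (3:ℝ) ^ p := by
    rw [hcast]; push_cast; ring
  have hc2 : ((3 ^ q + 1 : ℕ) : ℝ) - 1 = (3:ℝ) ^ q := by push_cast; ring
  have hc3 : ((3 ^ q + 1 : ℕ) : ℝ) - ((3 ^ q - 3 ^ p : ℕ) : ℝ) + 1 = (3:ℝ) ^ p + 2 := by
    rw [hcast]; push_cast; ring
  rw [show ((3 ^ q + 1 : ℕ) : ℝ) - ((3 ^ q - 3 ^ p : ℕ) : ℝ) - 1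
      = ((3 ^ q + 1 : ℕ) : ℝ) - ((3 ^ q - 3 ^ p : ℕ) : ℝ) - 1 from rfl, hc1, hc2] at hx
  rw [hc3, hc2] at hx'
  have hlog3 : 0 < Real.log 3 := Real.log_pos (by norm_num)
  have hlogq : Real.log ((3:ℝ) ^ q) = q * Real.log 3 := Real.log_pow 3 q
  have hlogp : Real.log ((3:ℝ) ^ p) = p * Real.log 3 := Real.log_pow 3 p
  have hlogqpos : 0 < Real.log ((3:ℝ) ^ q) := by rw [hlogq]; positivity
  have h3ppos : (0:ℝ) < 3 ^ p := by positivity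
  have hxval : x = (p:ℝ) / q := by
    rw [hx, hlogp, hlogq, div_eq_div_iff (mul_pos hq0 hlog3).ne' hq0.ne']
    ring
  have hxx' : x ≤ x' := by
    rw [hx, hx']
    have : Real.log ((3:ℝ) ^ p) ≤ Real.log ((3:ℝ) ^ p + 2) :=
      Real.log_le_log (by positivity) (by linarith)
    exact div_le_div_of_nonneg_right this hlogqpos.le
  have hx'up : x' ≤ ((p:ℝ) + 1) / q := by
    rw [hx']
    have h1 : (3:ℝ) ^ p + 2 ≤ 3 ^ (p + 1) := by
      have h3 : (1:ℝ) ≤ 3 ^ p := one_le_pow₀ (by norm_num : (1:ℝ) ≤ 3)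
      rw [pow_succ]; nlinarith
    have hle : Real.log ((3:ℝ) ^ p + 2) ≤ ((p:ℝ) + 1) * Real.log 3 := by
      calc Real.log ((3:ℝ) ^ p + 2) ≤ Real.log ((3:ℝ) ^ (p + 1)) :=
            Real.log_le_log (by positivity) h1
        _ = ((p:ℝ) + 1) * Real.log 3 := by rw [Real.log_pow]; push_cast; ring
    rw [hlogq, div_le_div_iff₀ (mul_pos hq0 hlog3) hq0]
    calc Real.log ((3:ℝ) ^ p + 2) * q ≤ (((p:ℝ) + 1) * Real.log 3) * q :=
          mul_le_mul_of_nonneg_right hle hq0.le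
      _ = ((p:ℝ) + 1) * (↑q * Real.log 3) := by ring
  have hxlow : y₀ ≤ x := by
    rw [hxval, le_div_iff₀ hq0]; exact hple
  have hx'B : x' ≤ 2 - B := by
    have h1 : ((p:ℝ) + 1) / q ≤ y₀ + 2 / q := by
      rw [div_le_iff₀ hq0]
      have h3 : (y₀ + 2 / q) * q = y₀ * q + 2 := by field_simp
      rw [h3]; linarith
    have h2 : y₀ + 2 / q ≤ 2 - B := by rw [hy₀def]; linarith
    linarith
  set a : ℝ := 2 - x with hadef
  set b : ℝ := 2 - x' with hbdef
  have hb1 : 1 < b := by rw [hbdef]; linarith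
  have hba : b ≤ a := by rw [hadef, hbdef]; linarith
  have haA : a ≤ A := by rw [hadef]; rw [hy₀def] at hxlow; linarith
  have hbB : B ≤ b := by rw [hbdef]; linarith
  have ha0 : (0:ℝ) < a := by linarith
  have hb0 : (0:ℝ) < b := by linarith
  have hapow : 0 < a ^ n := pow_pos ha0 n
  have hbpow : 0 < b ^ n := pow_pos hb0 n
  have hden : ∀ y : ℝ, 1 + (1 - y) * ∑ j ∈ Finset.range n, (2 - y) ^ j = (2 - y) ^ n := by
    intro y
    linear_combination geom_sum_mul (2 - y) n
  have hα : ∀ y : ℝ, α₁ y = 1 / (2 - y) ^ n := by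
    intro y
    rw [hα₁]
    simp only [Nat.add_sub_cancel]
    rw [hden]
  rw [hα x, hα x', ← hadef, ← hbdef]
  have han : a ^ n ≤ 1 / r₁ := by
    rw [← hApow]; exact pow_le_pow_left₀ ha0.le haA n
  have hbn : 1 / r₂ ≤ b ^ n := by
    rw [← hBpow]; exact pow_le_pow_left₀ (by linarith) hbB n
  have hban : b ^ n ≤ a ^ n := pow_le_pow_left₀ hb0.le hba n
  have g3 : 1 / b ^ n ≤ r₂ := by
    rw [div_le_iff₀ hbpow]
    calc (1:ℝ) = r₂ * (1 / r₂) := by field_simp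
      _ ≤ r₂ * b ^ n := mul_le_mul_of_nonneg_left hbn hr₂0.le
  have g2 : 1 / a ^ n ≤ 1 / b ^ n := one_div_le_one_div_of_le hbpow hban
  refine ⟨?_, g2.trans g3, g2, g3, ?_⟩
  · rw [le_div_iff₀ hapow]
    calc r₁ * a ^ n ≤ r₁ * (1 / r₁) := mul_le_mul_of_nonneg_left han h₁.le
      _ = 1 := by field_simp
  · -- closeness
    have hinvb : 1 / b ≤ 1 := by rw [div_le_one hb0]; linarith
    have hinva0 : (0:ℝ) < 1 / a := by positivity
    have hinvab : 1 / a ≤ 1 / b := one_div_le_one_div_of_le hb0 hba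
    have hgs := geom_sum₂_mul (1 / b) (1 / a) n
    have hsum : (∑ i ∈ Finset.range n, (1 / b) ^ i * (1 / a) ^ (n - 1 - i)) ≤ (n:ℝ) := by
      calc (∑ i ∈ Finset.range n, (1 / b) ^ i * (1 / a) ^ (n - 1 - i))
          ≤ ∑ _i ∈ Finset.range n, (1:ℝ) := by
            apply Finset.sum_le_sum
            intro i _
            have hb' : (0:ℝ) ≤ 1 / b := by positivity
            have h1 : (1 / b) ^ i ≤ 1 := pow_le_one₀ hb' hinvb
            have h2 : (1 / a) ^ (n - 1 - i) ≤ 1 :=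
              pow_le_one₀ (by positivity) (hinvab.trans hinvb)
            have h3 : (0:ℝ) ≤ (1 / a) ^ (n - 1 - i) := by positivity
            exact mul_le_one₀ h1 h3 h2
        _ = (n:ℝ) := by simp
    have hdiff : 1 / b - 1 / a ≤ a - b := by
      have heq : 1 / b - 1 / a = (a - b) / (a * b) := by
        rw [div_sub_div _ _ hb0.ne' ha0.ne', one_mul, mul_one, mul_comm b a]
      rw [heq]
      refine div_le_self (by linarith) ?_
      calc (1:ℝ) = 1 * 1 := by norm_num
        _ ≤ a * b := mul_le_mul (by linarith) (by linarith) (by norm_num) (by linarith)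
    have hdiff0 : 0 ≤ 1 / b - 1 / a := by linarith
    have hsum0 : 0 ≤ (∑ i ∈ Finset.range n, (1 / b) ^ i * (1 / a) ^ (n - 1 - i)) :=
      Finset.sum_nonneg fun i _ => by positivity
    have hab : a - b ≤ 1 / q := by
      have hsplit : ((p:ℝ) + 1) / q = (p:ℝ) / q + 1 / q := by ring
      have : x' - x ≤ 1 / q := by
        rw [hxval]
        rw [hsplit] at hx'up
        linarith
      rw [hadef, hbdef]; linarith
    have h1 : (1 / b) ^ n - (1 / a) ^ n ≤ (n:ℝ) * (a - b) := by
      rw [← hgs]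
      exact mul_le_mul hsum hdiff hdiff0 (by positivity)
    have heqpow : 1 / b ^ n - 1 / a ^ n = (1 / b) ^ n - (1 / a) ^ n := by
      rw [div_pow, div_pow, one_pow]
    have h2 : (n:ℝ) * (a - b) ≤ (n:ℝ) / q := by
      rw [div_eq_mul_inv, ← one_div]
      exact mul_le_mul_of_nonneg_left hab (by positivity)
    linarith [heqpow ▸ h1]
end
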